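/- arXiv:math/0001118 — 2 statements merged into one kernel-verified Lean document; each statement's English description precedes it below -/
import Mathlib

section
/- The monoid homomorphism from the free monoid on two letters L, R to the multiplicative monoid of 2×2 integer matrices, sending L to the matrix [[1,1],[0,1]] and R to the matrix [[1,0],[1,1]], is injective, and its image is exactly the set of 2×2 matrices with nonnegative integer entries and determinant 1. -/
open Matrix

/-- The generator `L = [[1,1],[0,1]]`. -/
def Lmat : Matrix (Fin 2) (Fin 2) ℤ := !![1, 1; 0, 1]

/-- The generator `R = [[1,0],[1,1]]`. -/
def Rmat : Matrix (Fin 2) (Fin 2) ℤ := !![1, 0; 1, 1]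

/-- The monoid homomorphism from the free monoid on two letters
(`false ↦ L`, `true ↦ R`) to `2 × 2` integer matrices. -/
noncomputable def wordToMat : FreeMonoid Bool →* Matrix (Fin 2) (Fin 2) ℤ :=
  FreeMonoid.lift (fun b => if b then Rmat else Lmat)

/-!
Left multiplication by `L` adds the bottom row to the top row, and by `R` adds the top row to
the bottom row. In a nonnegative integer matrix of determinant `1` other than the identity one
row dominates the other entrywise; subtracting the smaller row from the larger one stays in
`SL₂(ℕ)` and lowers the entry sum, so every such matrix is a product of `L`s and `R`s. The first
letter is determined by which row dominates (rows dominating each other would be equal, forcing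
determinant `0`), and `L`, `R` cancel on the left, so the factorisation is unique.
-/

theorem Int.rows_le_or_le_of_mul_sub_mul_eq_one {a b c d : ℤ} (ha : 0 ≤ a) (hb : 0 ≤ b)
    (hc : 0 ≤ c) (h : a * d - b * c = 1) :
    (c ≤ a ∧ d ≤ b) ∨ (a ≤ c ∧ b ≤ d) ∨ (a = 1 ∧ b = 0 ∧ c = 0 ∧ d = 1) := by
  rcases le_or_gt a c with hac | hca
  · by_cases hbd : b ≤ d
    · exact .inr (.inl ⟨hac, hbd⟩)
    · nlinarith
  · by_cases hdb : d ≤ b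
    · exact .inl ⟨hca.le, hdb⟩
    · have : b + c ≤ 0 := by nlinarith
      obtain ⟨rfl, rfl⟩ : b = 0 ∧ c = 0 := by omega
      have : a * d = 1 := by linarith
      rcases Int.eq_one_or_neg_one_of_mul_eq_one' this with ⟨h1, h2⟩ | ⟨h1, h2⟩ <;> omega

theorem Matrix.mul_entries_nonneg {l m n R : Type*} [Fintype m] [Semiring R] [PartialOrder R]
    [IsOrderedRing R] {A : Matrix l m R} {B : Matrix m n R} (hA : ∀ i j, 0 ≤ A i j)
    (hB : ∀ i j, 0 ≤ B i j) (i : l) (j : n) : 0 ≤ (A * B) i j :=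
  Finset.sum_nonneg fun k _ => mul_nonneg (hA i k) (hB k j)

/-- `SL₂(ℕ)`, realised inside the integer matrices. -/
def SL2N : Submonoid (Matrix (Fin 2) (Fin 2) ℤ) where
  carrier := {M | (∀ i j, 0 ≤ M i j) ∧ M.det = 1}
  one_mem' := ⟨fun i j => by rw [one_apply]; split_ifs <;> norm_num, det_one⟩
  mul_mem' := fun hA hB => ⟨mul_entries_nonneg hA.1 hB.1, by rw [det_mul, hA.2, hB.2, mul_one]⟩

theorem isUnit_of_mem_SL2N {M : Matrix (Fin 2) (Fin 2) ℤ} (hM : M ∈ SL2N) : IsUnit M := by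
  rw [isUnit_iff_isUnit_det, hM.2]
  exact isUnit_one

theorem Lmat_mem_SL2N : Lmat ∈ SL2N :=
  ⟨fun i j => by fin_cases i <;> fin_cases j <;> simp [Lmat], by simp [Lmat, det_fin_two_of]⟩

theorem Rmat_mem_SL2N : Rmat ∈ SL2N :=
  ⟨fun i j => by fin_cases i <;> fin_cases j <;> simp [Rmat], by simp [Rmat, det_fin_two_of]⟩

theorem wordToMat_mem_SL2N (w : FreeMonoid Bool) : wordToMat w ∈ SL2N := by
  induction w using FreeMonoid.inductionOn' with
  | one => exact wordToMat.map_one ▸ SL2N.one_mem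
  | of_mul b w ih =>
    rw [map_mul]
    cases b
    · exact SL2N.mul_mem Lmat_mem_SL2N ih
    · exact SL2N.mul_mem Rmat_mem_SL2N ih

theorem Lmat_mul (M : Matrix (Fin 2) (Fin 2) ℤ) :
    Lmat * M = !![M 0 0 + M 1 0, M 0 1 + M 1 1; M 1 0, M 1 1] := by
  rw [eta_fin_two M, Lmat, mul_fin_two]
  simp

theorem Rmat_mul (M : Matrix (Fin 2) (Fin 2) ℤ) :
    Rmat * M = !![M 0 0, M 0 1; M 0 0 + M 1 0, M 0 1 + M 1 1] := by
  rw [eta_fin_two M, Rmat, mul_fin_two]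
  simp

section Injectivity

variable {N N' : Matrix (Fin 2) (Fin 2) ℤ}

theorem Lmat_mul_ne_one (hN : ∀ i j, 0 ≤ N i j) : Lmat * N ≠ 1 := by
  intro h
  have h01 : N 0 1 + N 1 1 = 0 := by simpa [Lmat_mul] using congr_fun₂ h 0 1
  have h11 : N 1 1 = 1 := by simpa [Lmat_mul] using congr_fun₂ h 1 1
  linarith [hN 0 1]

theorem Rmat_mul_ne_one (hN : ∀ i j, 0 ≤ N i j) : Rmat * N ≠ 1 := by
  intro h
  have h00 : N 0 0 = 1 := by simpa [Rmat_mul] using congr_fun₂ h 0 0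
  have h10 : N 0 0 + N 1 0 = 0 := by simpa [Rmat_mul] using congr_fun₂ h 1 0
  linarith [hN 1 0]

theorem Lmat_mul_ne_Rmat_mul (hN : N ∈ SL2N) (hN' : ∀ i j, 0 ≤ N' i j) :
    Lmat * N ≠ Rmat * N' := by
  intro h
  have h00 : N 0 0 + N 1 0 = N' 0 0 := by simpa [Lmat_mul, Rmat_mul] using congr_fun₂ h 0 0
  have h01 : N 0 1 + N 1 1 = N' 0 1 := by simpa [Lmat_mul, Rmat_mul] using congr_fun₂ h 0 1
  have h10 : N 1 0 = N' 0 0 + N' 1 0 := by simpa [Lmat_mul, Rmat_mul] using congr_fun₂ h 1 0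
  have h11 : N 1 1 = N' 0 1 + N' 1 1 := by simpa [Lmat_mul, Rmat_mul] using congr_fun₂ h 1 1
  have top_row_zero : N 0 0 = 0 ∧ N 0 1 = 0 := by
    constructor <;> linarith [hN.1 0 0, hN.1 0 1, hN' 1 0, hN' 1 1]
  have hdet := hN.2
  rw [det_fin_two, top_row_zero.1, top_row_zero.2] at hdet
  simp at hdet

end Injectivity

theorem wordToMat_injective : Function.Injective wordToMat := by
  intro v w h
  induction v using FreeMonoid.inductionOn' generalizing w with
  | one =>
    cases w with
    | one => rfl
    | of_mul b w =>
      rw [map_one, map_mul] at h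
      cases b
      · exact absurd h.symm (Lmat_mul_ne_one (wordToMat_mem_SL2N w).1)
      · exact absurd h.symm (Rmat_mul_ne_one (wordToMat_mem_SL2N w).1)
  | of_mul a v ih =>
    cases w with
    | one =>
      rw [map_one, map_mul] at h
      cases a
      · exact absurd h (Lmat_mul_ne_one (wordToMat_mem_SL2N v).1)
      · exact absurd h (Rmat_mul_ne_one (wordToMat_mem_SL2N v).1)
    | of_mul b w =>
      rw [map_mul, map_mul] at h
      cases a <;> cases b
      · rw [ih ((isUnit_of_mem_SL2N Lmat_mem_SL2N).mul_left_cancel h)]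
      · exact absurd h (Lmat_mul_ne_Rmat_mul (wordToMat_mem_SL2N v) (wordToMat_mem_SL2N w).1)
      · exact absurd h.symm (Lmat_mul_ne_Rmat_mul (wordToMat_mem_SL2N w) (wordToMat_mem_SL2N v).1)
      · rw [ih ((isUnit_of_mem_SL2N Rmat_mem_SL2N).mul_left_cancel h)]

section Surjectivity

variable {M : Matrix (Fin 2) (Fin 2) ℤ}

def entrySum (M : Matrix (Fin 2) (Fin 2) ℤ) : ℤ := M 0 0 + M 0 1 + M 1 0 + M 1 1

theorem entrySum_nonneg (hM : ∀ i j, 0 ≤ M i j) : 0 ≤ entrySum M := by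
  unfold entrySum
  linarith [hM 0 0, hM 0 1, hM 1 0, hM 1 1]

theorem exists_Lmat_mul_of_mem_SL2N (hM : M ∈ SL2N) (hc : M 1 0 ≤ M 0 0)
    (hd : M 1 1 ≤ M 0 1) : ∃ N ∈ SL2N, M = Lmat * N ∧ entrySum N < entrySum M := by
  obtain ⟨hpos, hdet⟩ := hM
  rw [det_fin_two] at hdet
  have bottom_row_pos : 0 < M 1 0 + M 1 1 := by
    by_contra! h
    obtain ⟨h10, h11⟩ : M 1 0 = 0 ∧ M 1 1 = 0 := by
      constructor <;> linarith [hpos 1 0, hpos 1 1]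
    simp [h10, h11] at hdet
  refine ⟨!![M 0 0 - M 1 0, M 0 1 - M 1 1; M 1 0, M 1 1], ⟨?_, ?_⟩, ?_, ?_⟩
  · intro i j
    fin_cases i <;> fin_cases j <;> simp <;> linarith [hpos 1 0, hpos 1 1]
  · rw [det_fin_two_of]
    linear_combination hdet
  · rw [Lmat_mul]
    ext i j
    fin_cases i <;> fin_cases j <;> simp
  · simp only [entrySum, of_apply, cons_val', cons_val_zero, cons_val_one, cons_val_fin_one]
    linarith

theorem exists_Rmat_mul_of_mem_SL2N (hM : M ∈ SL2N) (ha : M 0 0 ≤ M 1 0)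
    (hb : M 0 1 ≤ M 1 1) : ∃ N ∈ SL2N, M = Rmat * N ∧ entrySum N < entrySum M := by
  obtain ⟨hpos, hdet⟩ := hM
  rw [det_fin_two] at hdet
  have top_row_pos : 0 < M 0 0 + M 0 1 := by
    by_contra! h
    obtain ⟨h00, h01⟩ : M 0 0 = 0 ∧ M 0 1 = 0 := by
      constructor <;> linarith [hpos 0 0, hpos 0 1]
    simp [h00, h01] at hdet
  refine ⟨!![M 0 0, M 0 1; M 1 0 - M 0 0, M 1 1 - M 0 1], ⟨?_, ?_⟩, ?_, ?_⟩
  · intro i j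
    fin_cases i <;> fin_cases j <;> simp <;> linarith [hpos 0 0, hpos 0 1]
  · rw [det_fin_two_of]
    linear_combination hdet
  · rw [Rmat_mul]
    ext i j
    fin_cases i <;> fin_cases j <;> simp
  · simp only [entrySum, of_apply, cons_val', cons_val_zero, cons_val_one, cons_val_fin_one]
    linarith

theorem exists_wordToMat_of_mul_of_mem_SL2N (hM : M ∈ SL2N) (h1 : M ≠ 1) :
    ∃ b, ∃ N ∈ SL2N, M = wordToMat (FreeMonoid.of b) * N ∧ entrySum N < entrySum M := by
  have hdet := hM.2
  rw [det_fin_two] at hdet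
  rcases Int.rows_le_or_le_of_mul_sub_mul_eq_one (hM.1 0 0) (hM.1 0 1) (hM.1 1 0) hdet with
    ⟨hc, hd⟩ | ⟨ha, hb⟩ | ⟨ha, hb, hc, hd⟩
  · exact ⟨false, exists_Lmat_mul_of_mem_SL2N hM hc hd⟩
  · exact ⟨true, exists_Rmat_mul_of_mem_SL2N hM ha hb⟩
  · exact absurd (by rw [eta_fin_two M, ha, hb, hc, hd, one_fin_two]) h1

end Surjectivity

theorem mem_mrange_wordToMat_of_mem_SL2N {M : Matrix (Fin 2) (Fin 2) ℤ} (hM : M ∈ SL2N) :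
    M ∈ MonoidHom.mrange wordToMat := by
  by_cases h1 : M = 1
  · exact h1 ▸ one_mem _
  obtain ⟨b, N, hN, hMN, hlt⟩ := exists_wordToMat_of_mul_of_mem_SL2N hM h1
  obtain ⟨w, hw⟩ := mem_mrange_wordToMat_of_mem_SL2N hN
  exact ⟨FreeMonoid.of b * w, by rw [map_mul, hw, hMN]⟩
termination_by (entrySum M).toNat
decreasing_by have := entrySum_nonneg hN.1; omega

theorem freeMonoid_to_SL2N_injective_and_range :
    Function.Injective wordToMat ∧
    Set.range wordToMat =
      {M : Matrix (Fin 2) (Fin 2) ℤ | (∀ i j, 0 ≤ M i j) ∧ M.det = 1} := by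
  refine ⟨wordToMat_injective, Set.Subset.antisymm ?_ fun M hM => ?_⟩
  · rintro _ ⟨w, rfl⟩
    exact wordToMat_mem_SL2N w
  · exact mem_mrange_wordToMat_of_mem_SL2N hM
end

section
/- Every matrix in SL₂(ℕ) other than the identity can be written uniquely as a product of the matrices L = [[1,1],[0,1]] and R = [[1,0],[1,1]]. -/
/-!
Left multiplication by `L` adds the second row to the first, and by `R` the first row to the
second. For `M ∈ SL₂(ℕ)`, `M ≠ 1`, the determinant condition forces the two rows of `M` to be
comparable entrywise, so `M = L P` or `M = R P` with `P ∈ SL₂(ℕ)` of smaller entry sum; induction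
on the entry sum gives a word. Conversely `L P = R Q` with `P, Q` nonnegative forces the first row
of `P` to vanish, impossible when `det P = 1`; so the first letter of a word is determined by its
product, and cancelling it (`L` and `R` are invertible) gives uniqueness.
-/

open Matrix

namespace SL2N

local notation "M₂" => Matrix (Fin 2) (Fin 2) ℤ

def sl2Nat : Submonoid M₂ where
  carrier := {M | (∀ i j, 0 ≤ M i j) ∧ M.det = 1}
  mul_mem' := by
    rintro A B ⟨hA, hAdet⟩ ⟨hB, hBdet⟩
    refine ⟨fun i j => ?_, by rw [det_mul, hAdet, hBdet, one_mul]⟩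
    simp only [mul_apply, Fin.sum_univ_two]
    have := mul_nonneg (hA i 0) (hB 0 j)
    have := mul_nonneg (hA i 1) (hB 1 j)
    positivity
  one_mem' := ⟨fun i j => by by_cases h : i = j <;> simp [one_apply, h], det_one⟩

def entrySum (M : M₂) : ℤ := M 0 0 + M 0 1 + M 1 0 + M 1 1

def IsLRWord (l : List M₂) : Prop := ∀ A ∈ l, A = Lmat ∨ A = Rmat

section

variable {M P Q A B : M₂}

@[simp] lemma Lmat_mul_apply_zero (P : M₂) (j : Fin 2) : (Lmat * P) 0 j = P 0 j + P 1 j := by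
  simp [mul_apply, Fin.sum_univ_two, Lmat]

@[simp] lemma Lmat_mul_apply_one (P : M₂) (j : Fin 2) : (Lmat * P) 1 j = P 1 j := by
  simp [mul_apply, Fin.sum_univ_two, Lmat]

@[simp] lemma Rmat_mul_apply_zero (P : M₂) (j : Fin 2) : (Rmat * P) 0 j = P 0 j := by
  simp [mul_apply, Fin.sum_univ_two, Rmat]

@[simp] lemma Rmat_mul_apply_one (P : M₂) (j : Fin 2) : (Rmat * P) 1 j = P 0 j + P 1 j := by
  simp [mul_apply, Fin.sum_univ_two, Rmat]

lemma mem_sl2Nat_of_isLR (hA : A = Lmat ∨ A = Rmat) : A ∈ sl2Nat := by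
  rcases hA with rfl | rfl <;>
    refine ⟨fun i j => by fin_cases i <;> fin_cases j <;> simp [Lmat, Rmat], ?_⟩ <;>
    simp [Lmat, Rmat, det_fin_two_of]

lemma IsLRWord.prod_mem {l : List M₂} (hl : IsLRWord l) : l.prod ∈ sl2Nat :=
  sl2Nat.list_prod_mem fun A hA => mem_sl2Nat_of_isLR (hl A hA)

lemma isUnit_of_mem_sl2Nat (hM : M ∈ sl2Nat) : IsUnit M :=
  (isUnit_iff_isUnit_det M).2 (hM.2 ▸ isUnit_one)

lemma Lmat_mul_ne_one (hP : ∀ i j, 0 ≤ P i j) : Lmat * P ≠ 1 := by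
  intro h
  have h01 := congrFun (congrFun h 0) 1
  have h11 := congrFun (congrFun h 1) 1
  simp only [Lmat_mul_apply_zero, Lmat_mul_apply_one, one_apply_eq, one_apply_ne zero_ne_one]
    at h01 h11
  linarith [hP 0 1]

lemma Rmat_mul_ne_one (hP : ∀ i j, 0 ≤ P i j) : Rmat * P ≠ 1 := by
  intro h
  have h00 := congrFun (congrFun h 0) 0
  have h10 := congrFun (congrFun h 1) 0
  simp only [Rmat_mul_apply_zero, Rmat_mul_apply_one, one_apply_eq, one_apply_ne one_ne_zero]
    at h00 h10
  linarith [hP 1 0]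

lemma mul_ne_one (hA : A = Lmat ∨ A = Rmat) (hP : ∀ i j, 0 ≤ P i j) : A * P ≠ 1 := by
  rcases hA with rfl | rfl
  exacts [Lmat_mul_ne_one hP, Rmat_mul_ne_one hP]

lemma Lmat_mul_ne_Rmat_mul (hP : ∀ i j, 0 ≤ P i j) (hPdet : P.det ≠ 0) (hQ : ∀ i j, 0 ≤ Q i j) :
    Lmat * P ≠ Rmat * Q := by
  intro h
  have hrow : ∀ j, P 0 j = 0 := fun j => by
    have h0 := congrFun (congrFun h 0) j
    have h1 := congrFun (congrFun h 1) j
    simp only [Lmat_mul_apply_zero, Lmat_mul_apply_one, Rmat_mul_apply_zero, Rmat_mul_apply_one]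
      at h0 h1
    linarith [hP 0 j, hQ 1 j]
  exact hPdet (by simp [det_fin_two, hrow])

lemma head_eq_of_mul_eq (hA : A = Lmat ∨ A = Rmat) (hB : B = Lmat ∨ B = Rmat)
    (hP : P ∈ sl2Nat) (hQ : Q ∈ sl2Nat) (h : A * P = B * Q) : A = B := by
  rcases hA with rfl | rfl <;> rcases hB with rfl | rfl
  · rfl
  · exact absurd h (Lmat_mul_ne_Rmat_mul hP.1 (by simp [hP.2]) hQ.1)
  · exact absurd h.symm (Lmat_mul_ne_Rmat_mul hQ.1 (by simp [hQ.2]) hP.1)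
  · rfl

@[simp] lemma isLRWord_cons {l : List M₂} :
    IsLRWord (A :: l) ↔ (A = Lmat ∨ A = Rmat) ∧ IsLRWord l :=
  List.forall_mem_cons

lemma IsLRWord.cons_prod_ne_one {l : List M₂} (hl : IsLRWord (A :: l)) : (A :: l).prod ≠ 1 := by
  rw [isLRWord_cons] at hl
  rw [List.prod_cons]
  exact mul_ne_one hl.1 hl.2.prod_mem.1

theorem IsLRWord.prod_injective {l₁ l₂ : List M₂} (h₁ : IsLRWord l₁) (h₂ : IsLRWord l₂)
    (h : l₁.prod = l₂.prod) : l₁ = l₂ := by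
  induction l₁ generalizing l₂ with
  | nil =>
    cases l₂ with
    | nil => rfl
    | cons B t => exact absurd h.symm h₂.cons_prod_ne_one
  | cons A s ih =>
    cases l₂ with
    | nil => exact absurd h h₁.cons_prod_ne_one
    | cons B t =>
      rw [isLRWord_cons] at h₁ h₂
      rw [List.prod_cons, List.prod_cons] at h
      obtain rfl := head_eq_of_mul_eq h₁.1 h₂.1 h₁.2.prod_mem h₂.2.prod_mem h
      have hst := (isUnit_of_mem_sl2Nat (mem_sl2Nat_of_isLR h₁.1)).mul_left_cancel h
      rw [ih h₁.2 h₂.2 hst]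

lemma rows_le_or_le (hM : M ∈ sl2Nat) (hM1 : M ≠ 1) :
    (M 1 0 ≤ M 0 0 ∧ M 1 1 ≤ M 0 1) ∨ (M 0 0 ≤ M 1 0 ∧ M 0 1 ≤ M 1 1) := by
  obtain ⟨hpos, hdet⟩ := hM
  rw [det_fin_two] at hdet
  have h00 := hpos 0 0; have h01 := hpos 0 1; have h10 := hpos 1 0; have h11 := hpos 1 1
  by_contra! h
  rcases lt_or_ge (M 1 0) (M 0 0) with hc | hc
  · have hb := h.1 hc.le
    have key : (M 1 0 + 1) * (M 0 1 + 1) ≤ M 0 0 * M 1 1 :=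
      mul_le_mul (Int.add_one_le_of_lt hc) (Int.add_one_le_of_lt hb) (by omega) h00
    have hb : M 0 1 = 0 := by nlinarith
    have hc : M 1 0 = 0 := by nlinarith
    have ha : M 0 0 = 1 := by nlinarith
    have hd : M 1 1 = 1 := by nlinarith
    exact hM1 (by rw [eta_fin_two M, ha, hb, hc, hd, one_fin_two])
  · have hd := h.2 hc
    nlinarith [mul_le_mul_of_nonneg_right hc h11, mul_le_mul_of_nonneg_left hd.le h10]

lemma entrySum_nonneg (hP : ∀ i j, 0 ≤ P i j) : 0 ≤ entrySum P := by
  have := hP 0 0; have := hP 0 1; have := hP 1 0; have := hP 1 1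
  simp only [entrySum]
  linarith

lemma entrySum_lt_Lmat_mul (hP : P ∈ sl2Nat) : entrySum P < entrySum (Lmat * P) := by
  obtain ⟨hpos, hdet⟩ := hP
  rw [det_fin_two] at hdet
  have : 0 < P 1 0 + P 1 1 := by
    by_contra! h
    have h0 : P 1 0 = 0 := by linarith [hpos 1 0, hpos 1 1]
    have h1 : P 1 1 = 0 := by linarith [hpos 1 0, hpos 1 1]
    simp [h0, h1] at hdet
  simp only [entrySum, Lmat_mul_apply_zero, Lmat_mul_apply_one]
  linarith

lemma entrySum_lt_Rmat_mul (hP : P ∈ sl2Nat) : entrySum P < entrySum (Rmat * P) := by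
  obtain ⟨hpos, hdet⟩ := hP
  rw [det_fin_two] at hdet
  have : 0 < P 0 0 + P 0 1 := by
    by_contra! h
    have h0 : P 0 0 = 0 := by linarith [hpos 0 0, hpos 0 1]
    have h1 : P 0 1 = 0 := by linarith [hpos 0 0, hpos 0 1]
    simp [h0, h1] at hdet
  simp only [entrySum, Rmat_mul_apply_zero, Rmat_mul_apply_one]
  linarith

lemma entrySum_lt_mul (hA : A = Lmat ∨ A = Rmat) (hP : P ∈ sl2Nat) :
    entrySum P < entrySum (A * P) := by
  rcases hA with rfl | rfl
  exacts [entrySum_lt_Lmat_mul hP, entrySum_lt_Rmat_mul hP]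

lemma exists_eq_Lmat_mul (hM : M ∈ sl2Nat) (hle : M 1 0 ≤ M 0 0 ∧ M 1 1 ≤ M 0 1) :
    ∃ P ∈ sl2Nat, M = Lmat * P := by
  obtain ⟨hpos, hdet⟩ := hM
  refine ⟨!![M 0 0 - M 1 0, M 0 1 - M 1 1; M 1 0, M 1 1], ⟨fun i j => ?_, ?_⟩, ?_⟩
  · fin_cases i <;> fin_cases j <;> simp [hpos, hle.1, hle.2]
  · rw [det_fin_two_of, ← hdet, det_fin_two]; ring
  · ext i j; fin_cases i <;> fin_cases j <;> simp

lemma exists_eq_Rmat_mul (hM : M ∈ sl2Nat) (hle : M 0 0 ≤ M 1 0 ∧ M 0 1 ≤ M 1 1) :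
    ∃ P ∈ sl2Nat, M = Rmat * P := by
  obtain ⟨hpos, hdet⟩ := hM
  refine ⟨!![M 0 0, M 0 1; M 1 0 - M 0 0, M 1 1 - M 0 1], ⟨fun i j => ?_, ?_⟩, ?_⟩
  · fin_cases i <;> fin_cases j <;> simp [hpos, hle.1, hle.2]
  · rw [det_fin_two_of, ← hdet, det_fin_two]; ring
  · ext i j; fin_cases i <;> fin_cases j <;> simp

lemma exists_eq_mul_of_ne_one (hM : M ∈ sl2Nat) (hM1 : M ≠ 1) :
    ∃ A, (A = Lmat ∨ A = Rmat) ∧ ∃ P ∈ sl2Nat, M = A * P := by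
  rcases rows_le_or_le hM hM1 with hle | hle
  · exact ⟨Lmat, .inl rfl, exists_eq_Lmat_mul hM hle⟩
  · exact ⟨Rmat, .inr rfl, exists_eq_Rmat_mul hM hle⟩

end

theorem exists_isLRWord_prod_eq {M : M₂} (hM : M ∈ sl2Nat) : ∃ l, IsLRWord l ∧ l.prod = M := by
  by_cases hM1 : M = 1
  · exact ⟨[], by simp [IsLRWord], by simp [hM1]⟩
  obtain ⟨A, hA, P, hP, hMP⟩ := exists_eq_mul_of_ne_one hM hM1
  have : entrySum P < entrySum M := hMP ▸ entrySum_lt_mul hA hP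
  obtain ⟨l, hl, hlP⟩ := exists_isLRWord_prod_eq hP
  exact ⟨A :: l, isLRWord_cons.2 ⟨hA, hl⟩, by rw [List.prod_cons, hlP, hMP]⟩
termination_by (entrySum M).toNat
decreasing_by have := entrySum_nonneg hP.1; omega

end SL2N

/-- Every matrix in `SL₂(ℕ)` other than the identity is uniquely a (nonempty)
product of the matrices `L` and `R`. -/
theorem SL2N_unique_word (M : Matrix (Fin 2) (Fin 2) ℤ)
    (hpos : ∀ i j, 0 ≤ M i j) (hdet : M.det = 1) (hne : M ≠ 1) :
    ∃! l : List (Matrix (Fin 2) (Fin 2) ℤ),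
      l ≠ [] ∧ (∀ A ∈ l, A = Lmat ∨ A = Rmat) ∧ l.prod = M := by
  obtain ⟨l, hl, hlM⟩ := SL2N.exists_isLRWord_prod_eq (M := M) ⟨hpos, hdet⟩
  refine ⟨l, ⟨?_, hl, hlM⟩, fun l' ⟨_, hl', hl'M⟩ => ?_⟩
  · rintro rfl
    exact hne (by simpa using hlM.symm)
  · exact SL2N.IsLRWord.prod_injective hl' hl (hl'M.trans hlM.symm)
end
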